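/- Let k be a field of characteristic 0, A and B numerical semigroup algebras of numerical semigroups 𝒜, ℬ inside K = k[t,t⁻¹], and for d ∈ ℤ define ℓ_d(x) := ∏_{b ∈ Z_d(ℬ,𝒜)} (x − b) ∈ k[x]. Then under the identification 𝒟_K ≅ k[x] # ℤ, the set of differential operators D of degree d with D(B) ⊆ A equals I_d(ℬ,𝒜) # t^d, where I_d(ℬ,𝒜) = ⟨ℓ_d⟩ is the ideal of polynomials vanishing on Z_d(ℬ,𝒜). -/

import Mathlib

open Polynomial LaurentPolynomial

/-- `D` is a differential operator of order at most `n` on the commutative `k`-algebra `K`. -/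
def IsDiffOp (k K : Type*) [CommSemiring k] [CommRing K] [Algebra k K] :
    ℕ → (K →ₗ[k] K) → Prop
  | 0, D => ∃ u : K, ∀ x, D x = u * x
  | n + 1, D => ∀ a : K,
      IsDiffOp k K n (D ∘ₗ LinearMap.mulLeft k a - LinearMap.mulLeft k a ∘ₗ D)

/-- The operator `f # t^d` on `K = k[t,t⁻¹]`, acting by `t^a ↦ f(a) • t^{d+a}`. -/
noncomputable def Phi (k : Type*) [Field k] (f : Polynomial k) (d : ℤ) :
    LaurentPolynomial k →ₗ[k] LaurentPolynomial k :=
  (Finsupp.lsum k fun a : ℤ =>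
    LinearMap.toSpanSingleton k (LaurentPolynomial k)
      (f.eval (a : k) • LaurentPolynomial.T (d + a))) ∘ₗ
    (AddMonoidAlgebra.coeffLinearEquiv k).toLinearMap

/-- A numerical semigroup: an additive submonoid of `ℕ` with finite complement. -/
def IsNumericalSemigroup (A : AddSubmonoid ℕ) : Prop :=
  ((A : Set ℕ)ᶜ).Finite

/-- The semigroup algebra `k[𝒜] ⊆ k[t,t⁻¹]` of a numerical semigroup. -/
noncomputable def sgAlg (k : Type*) [Field k] (A : AddSubmonoid ℕ) :
    Submodule k (LaurentPolynomial k) :=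
  Submodule.span k {x | ∃ a ∈ A, x = LaurentPolynomial.T (a : ℤ)}

/-! Since `k[ℬ]` is spanned by the monomials `t^b`, it suffices to test `f # t^d` on them, where
it gives `f(b) t^{b+d}`. Such a multiple `c t^m` lies in `k[𝒜]` iff `c = 0` or `m ∈ 𝒜`, because
every element of `k[𝒜]` has zero coefficients outside `𝒜`. -/

lemma Phi_apply_T (k : Type*) [Field k] (f : Polynomial k) (d a : ℤ) :
    Phi k f d (T a) = f.eval (a : k) • T (d + a) := by
  change (Finsupp.lsum k fun a : ℤ => LinearMap.toSpanSingleton k (LaurentPolynomial k)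
    (f.eval (a : k) • T (d + a))) (Finsupp.single a 1) = _
  rw [Finsupp.lsum_single, LinearMap.toSpanSingleton_apply_one]

section sgAlg

variable {k : Type*} [Field k] {A : AddSubmonoid ℕ}

lemma T_mem_sgAlg {a : ℕ} (ha : a ∈ A) : (T a : LaurentPolynomial k) ∈ sgAlg k A :=
  Submodule.subset_span ⟨a, ha, rfl⟩

lemma sgAlg_le_comap_iff (B : AddSubmonoid ℕ) (D : LaurentPolynomial k →ₗ[k] LaurentPolynomial k) :
    sgAlg k B ≤ (sgAlg k A).comap D ↔ ∀ b ∈ B, D (T b) ∈ sgAlg k A := by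
  rw [sgAlg, Submodule.span_le]
  constructor
  · exact fun h b hb => h ⟨b, hb, rfl⟩
  · rintro h _ ⟨b, hb, rfl⟩
    exact h b hb

lemma coeff_eq_zero_of_mem_sgAlg {x : LaurentPolynomial k} (hx : x ∈ sgAlg k A) {m : ℤ}
    (hm : ∀ a ∈ A, (a : ℤ) ≠ m) : x.coeff m = 0 := by
  have hle : sgAlg k A ≤ LinearMap.ker
      (Finsupp.lapply m ∘ₗ (AddMonoidAlgebra.coeffLinearEquiv k).toLinearMap) := by
    refine Submodule.span_le.2 ?_
    rintro _ ⟨a, ha, rfl⟩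
    simp [hm a ha]
  exact hle hx

lemma smul_T_mem_sgAlg_iff (c : k) (m : ℤ) :
    c • (T m : LaurentPolynomial k) ∈ sgAlg k A ↔ c = 0 ∨ ∃ a ∈ A, (a : ℤ) = m := by
  constructor
  · intro h
    by_contra! hcm
    have hcoeff := coeff_eq_zero_of_mem_sgAlg h hcm.2
    simp [hcm.1] at hcoeff
  · rintro (rfl | ⟨a, ha, rfl⟩)
    · simp
    · exact Submodule.smul_mem _ c (T_mem_sgAlg ha)

end sgAlg

theorem diffOps_of_degree_d_from_B_to_A_general (k : Type*) [Field k]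
    (A B : AddSubmonoid ℕ)
    (d : ℤ) (f : Polynomial k) :
    (∀ x ∈ sgAlg k B, Phi k f d x ∈ sgAlg k A) ↔
      (∀ b : ℕ, b ∈ B → (¬ ∃ a ∈ A, (b : ℤ) + d = (a : ℤ)) → f.eval (b : k) = 0) := by
  refine (sgAlg_le_comap_iff B (Phi k f d)).trans (forall₂_congr fun b _ => ?_)
  rw [Phi_apply_T, smul_T_mem_sgAlg_iff, Int.cast_natCast, or_iff_not_imp_right]
  simp only [add_comm d, eq_comm]

/-- A degree-`d` differential operator `f # t^d` maps `B` into `A` iff its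
polynomial `f` vanishes on `Z_d(ℬ,𝒜)`, i.e. `f ∈ I_d(ℬ,𝒜)`. -/
theorem diffOps_of_degree_d_from_B_to_A (k : Type*) [Field k] [CharZero k]
    (A B : AddSubmonoid ℕ)
    (hA : IsNumericalSemigroup A) (hB : IsNumericalSemigroup B)
    (d : ℤ) (f : Polynomial k) :
    (∀ x ∈ sgAlg k B, Phi k f d x ∈ sgAlg k A) ↔
      (∀ b : ℕ, b ∈ B → (¬ ∃ a ∈ A, (b : ℤ) + d = (a : ℤ)) → f.eval (b : k) = 0) :=
  diffOps_of_degree_d_from_B_to_A_general k A B d f
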